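/- Let d ≥ 1, n ≥ 1, λ > 0, κ > 0, β ∈ [0,1), and let Q_1,…,Q_n be Borel probability measures on ℝ^d such that for each j: (i) for every x in 𝒳 := {x ∈ ℝ^d : x_m ≥ 0 for all m, ∑_m x_m ≤ 1}, one has xᵀξ ≥ −β for Q_j-almost every ξ; and (ii) ∫ ‖ξ‖² dQ_j(ξ) ≤ σ̄_j² < ∞. Let Θ̂ be a nonempty compact convex subset of the probability simplex Θ ⊆ ℝ^n. Define φ^n(x) := ( ∫ −log(1 + xᵀξ) dQ_1(ξ), …, ∫ −log(1 + xᵀξ) dQ_n(ξ) ) ∈ ℝ^n, θ*(x) := Proj_{Θ̂}( φ^n(x)/(2λ) ) (Euclidean metric projection onto Θ̂), and for x = (x¹, x²) ∈ 𝒳 × 𝒳 define F(x) := (F_1(x), F_2(x)) with F_i(x) := ∑_{j=1}^n θ*_j(x^i) ∫ ( −ξ/(1 + (x^i)ᵀξ) ) dQ_j(ξ) + κ (x^i − x^{−i}), where −ξ/(1 + xᵀξ) is the gradient in x of −log(1 + xᵀξ). Then F is monotone on 𝒳 × 𝒳 (i.e., ⟨F(x) − F(y), x − y⟩ ≥ 0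 for all x, y ∈ 𝒳 × 𝒳) and Lipschitz continuous on 𝒳 × 𝒳 with modulus L_F = (√2 + √2/(2λ)) · n · (max_j σ̄_j²)/(1 − β)² + 2√2 κ. -/

import Mathlib

/-!
Each loss `φⱼ(x) = E_{Qⱼ}[-log(1 + xᵀξ)]` is convex with gradient `gⱼ(x) = E_{Qⱼ}[-ξ / (1 + xᵀξ)]`,
and on `𝒳` every denominator is at least `1 - β`. Hence `φⱼ` is Lipschitz and `gⱼ` is bounded,
both with constant `E‖ξ‖ / (1 - β) ≤ σ̄ⱼ / (1 - β)`, while `gⱼ` is Lipschitz with constant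
`σ̄ⱼ² / (1 - β)²`.

The weights `θ*(x)` are the metric projection of `φ(x) / (2λ)` onto the convex set `Θ̂`, which is
firmly nonexpansive: `⟨θ*(x) - θ*(y), φ(x) - φ(y)⟩ ≥ 2λ ‖θ*(x) - θ*(y)‖² ≥ 0`. With the gradient
inequality `⟨gⱼ(x), y - x⟩ ≤ φⱼ(y) - φⱼ(x)` and `θ* ≥ 0` this makes `G(x) = ∑ⱼ θ*ⱼ(x) gⱼ(x)`
monotone, and the splitting
`G(x) - G(y) = ∑ⱼ θ*ⱼ(x) (gⱼ(x) - gⱼ(y)) + ∑ⱼ (θ*ⱼ(x) - θ*ⱼ(y)) gⱼ(y)`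
shows that `G` is Lipschitz with constant `(1 + 1/(2λ)) ∑ⱼ σ̄ⱼ² / (1 - β)²`.

The competition penalty adds `κ ‖(x¹ - y¹) - (x² - y²)‖² ≥ 0` to `⟨F(x) - F(y), x - y⟩` and at most
`2κ` to the Lipschitz constant of each account; the factor `√2` comes from
`‖a‖ + ‖b‖ ≤ √2 ‖(a, b)‖`.
-/

open MeasureTheory

noncomputable section

/-- The probability simplex Θ in ℝⁿ. -/
def simplex (n : ℕ) : Set (Fin n → ℝ) := {θ | ∑ j, θ j = 1 ∧ ∀ j, 0 ≤ θ j}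

/-- The feasible portfolio set 𝒳 = {x ∈ ℝ^d : x ≥ 0, ∑ x_m ≤ 1}. -/
def portfolioSet (d : ℕ) : Set (Fin d → ℝ) := {x | (∀ m, 0 ≤ x m) ∧ ∑ m, x m ≤ 1}

open scoped RealInnerProductSpace

section NearestPoint

variable {E : Type*} [NormedAddCommGroup E] [InnerProductSpace ℝ E] {K : Set E} {c c' p q : E}

theorem inner_sub_sub_nonpos_of_isMinOn (hK : Convex ℝ K) (hp : p ∈ K)
    (hpc : IsMinOn (fun z => ‖z - c‖) K p) {z : E} (hz : z ∈ K) : ⟪c - p, z - p⟫ ≤ 0 := by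
  refine (norm_eq_iInf_iff_real_inner_le_zero hK hp).1 ?_ z hz
  have : Nonempty K := ⟨⟨p, hp⟩⟩
  refine le_antisymm (le_ciInf fun w => ?_) (ciInf_le (f := fun w : K => ‖c - w‖) ⟨0, ?_⟩ ⟨p, hp⟩)
  · rw [norm_sub_rev c, norm_sub_rev c]
    exact isMinOn_iff.1 hpc w w.2
  · rintro _ ⟨w, rfl⟩
    exact norm_nonneg _

/-- Firm nonexpansiveness of the metric projection onto a convex set. -/
theorem sq_norm_sub_le_inner_of_isMinOn (hK : Convex ℝ K) (hp : p ∈ K) (hq : q ∈ K)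
    (hpc : IsMinOn (fun z => ‖z - c‖) K p) (hqc : IsMinOn (fun z => ‖z - c'‖) K q) :
    ‖p - q‖ ^ 2 ≤ ⟪p - q, c - c'⟫ := by
  have h₁ := inner_sub_sub_nonpos_of_isMinOn hK hp hpc hq
  have h₂ := inner_sub_sub_nonpos_of_isMinOn hK hq hqc hp
  have : ⟪c - p, q - p⟫ + ⟪c' - q, p - q⟫ = ‖p - q‖ ^ 2 - ⟪p - q, c - c'⟫ := by
    rw [← real_inner_self_eq_norm_sq]
    simp only [inner_sub_left, inner_sub_right, real_inner_comm]
    ring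
  linarith

theorem inner_sub_nonneg_of_isMinOn_smul (hK : Convex ℝ K) {t : ℝ} (ht : 0 < t)
    (hp : p ∈ K) (hq : q ∈ K) (hpc : IsMinOn (fun z => ‖z - t • c‖) K p)
    (hqc : IsMinOn (fun z => ‖z - t • c'‖) K q) : 0 ≤ ⟪p - q, c - c'⟫ := by
  have h := sq_norm_sub_le_inner_of_isMinOn hK hp hq hpc hqc
  rw [← smul_sub, real_inner_smul_right] at h
  exact nonneg_of_mul_nonneg_right ((sq_nonneg _).trans h) ht

theorem norm_sub_le_of_isMinOn_smul (hK : Convex ℝ K) {t : ℝ} (ht : 0 ≤ t)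
    (hp : p ∈ K) (hq : q ∈ K) (hpc : IsMinOn (fun z => ‖z - t • c‖) K p)
    (hqc : IsMinOn (fun z => ‖z - t • c'‖) K q) : ‖p - q‖ ≤ t * ‖c - c'‖ := by
  have h := (sq_norm_sub_le_inner_of_isMinOn hK hp hq hpc hqc).trans (real_inner_le_norm _ _)
  rw [← smul_sub, norm_smul, Real.norm_of_nonneg ht, sq] at h
  rcases (norm_nonneg (p - q)).eq_or_lt with h0 | h0
  · rw [← h0]
    positivity
  · exact le_of_mul_le_mul_left h h0

end NearestPoint

theorem Real.log_sub_log_le_sub_div {a b : ℝ} (ha : 0 < a) (hb : 0 < b) :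
    Real.log b - Real.log a ≤ (b - a) / a := by
  rw [← Real.log_div hb.ne' ha.ne', sub_div, div_self ha.ne']
  exact Real.log_le_sub_one_of_pos (div_pos hb ha)

theorem Real.abs_log_sub_log_le {a b c : ℝ} (hc : 0 < c) (ha : c ≤ a) (hb : c ≤ b) :
    |Real.log b - Real.log a| ≤ |b - a| / c := by
  have key : ∀ {x y : ℝ}, c ≤ x → c ≤ y → Real.log y - Real.log x ≤ |y - x| / c :=
    fun hx hy => (Real.log_sub_log_le_sub_div (hc.trans_le hx) (hc.trans_le hy)).trans <|
      (div_le_div_of_nonneg_right (le_abs_self _) (hc.trans_le hx).le).trans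
        (div_le_div_of_nonneg_left (abs_nonneg _) hc hx)
  refine abs_le.2 ⟨?_, key ha hb⟩
  have := key hb ha
  rw [abs_sub_comm] at this
  linarith

theorem abs_inv_sub_inv_le {a b c : ℝ} (hc : 0 < c) (ha : c ≤ a) (hb : c ≤ b) :
    |a⁻¹ - b⁻¹| ≤ |b - a| / c ^ 2 := by
  have ha0 := hc.trans_le ha
  have hb0 := hc.trans_le hb
  rw [inv_sub_inv ha0.ne' hb0.ne', abs_div, abs_of_pos (mul_pos ha0 hb0), sq]
  exact div_le_div_of_nonneg_left (abs_nonneg _) (mul_pos hc hc) (mul_le_mul ha hb hc.le ha0.le)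

theorem add_le_sqrt_two_mul_sqrt (a b : ℝ) : a + b ≤ √2 * √(a ^ 2 + b ^ 2) := by
  rw [← Real.sqrt_mul zero_le_two]
  exact (le_abs_self _).trans (Real.abs_le_sqrt add_sq_le)

theorem sqrt_sum_sq_le_sqrt_sum_mul {ι : Type*} [Fintype ι] {x s : ι → ℝ} {r : ℝ}
    (hs : ∀ j, 0 ≤ s j) (hr : 0 ≤ r) (h : ∀ j, |x j| ≤ √(s j) * r) :
    √(∑ j, x j ^ 2) ≤ √(∑ j, s j) * r := by
  calc √(∑ j, x j ^ 2) ≤ √(∑ j, s j * r ^ 2) := by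
        gcongr with j
        calc x j ^ 2 = |x j| ^ 2 := (sq_abs _).symm
          _ ≤ (√(s j) * r) ^ 2 := pow_le_pow_left₀ (abs_nonneg _) (h j) 2
          _ = s j * r ^ 2 := by rw [mul_pow, Real.sq_sqrt (hs j)]
    _ = √(∑ j, s j) * r := by
        rw [← Finset.sum_mul, Real.sqrt_mul (Finset.sum_nonneg fun j _ => hs j),
          Real.sqrt_sq hr]

theorem norm_sum_smul_sub_sum_smul_le {ι E : Type*} [Fintype ι] [NormedAddCommGroup E]
    [NormedSpace ℝ E] (a b : ι → ℝ) (u u' : ι → E) :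
    ‖∑ j, a j • u j - ∑ j, b j • u' j‖
      ≤ ∑ j, |a j| * ‖u j - u' j‖ + ∑ j, |a j - b j| * ‖u' j‖ := by
  have : ∑ j, a j • u j - ∑ j, b j • u' j = ∑ j, (a j • (u j - u' j) + (a j - b j) • u' j) := by
    rw [← Finset.sum_sub_distrib]
    exact Finset.sum_congr rfl fun j _ => by rw [smul_sub, sub_smul]; abel
  rw [this, ← Finset.sum_add_distrib]
  refine (norm_sum_le _ _).trans (Finset.sum_le_sum fun j _ => (norm_add_le _ _).trans_eq ?_)
  rw [norm_smul, norm_smul, Real.norm_eq_abs, Real.norm_eq_abs]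

theorem sum_le_card_mul_iSup {ι : Type*} [Fintype ι] {f g : ι → ℝ} (h : ∀ j, f j ≤ g j) :
    ∑ j, f j ≤ Fintype.card ι * ⨆ j, g j :=
  (Finset.sum_le_sum fun j _ => h j).trans <| by
    simpa using Finset.sum_le_card_nsmul Finset.univ g _
      fun j _ => le_ciSup (Set.finite_range g).bddAbove j

section LogUtility

variable {E : Type*} [NormedAddCommGroup E] [InnerProductSpace ℝ E] {β : ℝ} {x v w : E}

theorem abs_log_one_add_inner_sub_le (hβ : β < 1) (hv : -β ≤ ⟪x, v⟫) (hw : -β ≤ ⟪x, w⟫) :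
    |Real.log (1 + ⟪x, v⟫) - Real.log (1 + ⟪x, w⟫)| ≤ ‖x‖ * ‖v - w‖ / (1 - β) := by
  refine (Real.abs_log_sub_log_le (sub_pos.2 hβ) (by linarith) (by linarith)).trans ?_
  gcongr
  rw [add_sub_add_left_eq_sub, ← inner_sub_right (𝕜 := ℝ) x]
  exact abs_real_inner_le_norm x (v - w)

theorem norm_inv_one_add_inner_smul_le (hβ : β < 1) (hv : -β ≤ ⟪x, v⟫) :
    ‖(1 + ⟪x, v⟫)⁻¹ • x‖ ≤ ‖x‖ / (1 - β) := by
  rw [norm_smul, norm_inv, Real.norm_of_nonneg (by linarith), inv_mul_eq_div]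
  exact div_le_div_of_nonneg_left (norm_nonneg _) (sub_pos.2 hβ) (by linarith)

theorem norm_inv_one_add_inner_smul_sub_le (hβ : β < 1) (hv : -β ≤ ⟪x, v⟫)
    (hw : -β ≤ ⟪x, w⟫) :
    ‖(1 + ⟪x, v⟫)⁻¹ • x - (1 + ⟪x, w⟫)⁻¹ • x‖ ≤ ‖x‖ ^ 2 * ‖v - w‖ / (1 - β) ^ 2 := by
  rw [← sub_smul, norm_smul, Real.norm_eq_abs]
  calc |(1 + ⟪x, v⟫)⁻¹ - (1 + ⟪x, w⟫)⁻¹| * ‖x‖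
      ≤ |(1 + ⟪x, w⟫) - (1 + ⟪x, v⟫)| / (1 - β) ^ 2 * ‖x‖ := by
        gcongr
        exact abs_inv_sub_inv_le (sub_pos.2 hβ) (by linarith) (by linarith)
    _ ≤ ‖x‖ * ‖v - w‖ / (1 - β) ^ 2 * ‖x‖ := by
        gcongr
        rw [add_sub_add_left_eq_sub, ← inner_sub_right (𝕜 := ℝ) x, norm_sub_rev v w]
        exact abs_real_inner_le_norm x (w - v)
    _ = ‖x‖ ^ 2 * ‖v - w‖ / (1 - β) ^ 2 := by ring

variable {Ω : Type*} [MeasurableSpace Ω] {μ : Measure Ω} {X : Ω → E}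

def expectedLogLoss (μ : Measure Ω) (X : Ω → E) (v : E) : ℝ :=
  ∫ ω, -Real.log (1 + ⟪X ω, v⟫) ∂μ

def expectedLogLossGrad (μ : Measure Ω) (X : Ω → E) (v : E) : E :=
  ∫ ω, -((1 + ⟪X ω, v⟫)⁻¹ • X ω) ∂μ

theorem integrable_log_one_add_inner (hX : Integrable X μ) (hβ0 : 0 ≤ β) (hβ1 : β < 1)
    (hv : ∀ᵐ ω ∂μ, -β ≤ ⟪X ω, v⟫) : Integrable (fun ω => Real.log (1 + ⟪X ω, v⟫)) μ := by
  refine ((hX.norm.mul_const ‖v‖).div_const (1 - β)).mono' ?_ ?_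
  · exact (Real.measurable_log.comp_aemeasurable (aemeasurable_const.add
      (hX.1.inner aestronglyMeasurable_const).aemeasurable)).aestronglyMeasurable
  · filter_upwards [hv] with ω hω
    simpa using abs_log_one_add_inner_sub_le (w := (0 : E)) hβ1 hω (by simpa using hβ0)

theorem integrable_inv_one_add_inner_smul (hX : Integrable X μ) (hβ : β < 1)
    (hv : ∀ᵐ ω ∂μ, -β ≤ ⟪X ω, v⟫) : Integrable (fun ω => (1 + ⟪X ω, v⟫)⁻¹ • X ω) μ :=
  (hX.norm.div_const (1 - β)).mono'
    ((aemeasurable_const.add (hX.1.inner aestronglyMeasurable_const).aemeasurable).inv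
      |>.aestronglyMeasurable.smul hX.1)
    (hv.mono fun _ hω => norm_inv_one_add_inner_smul_le hβ hω)

theorem norm_expectedLogLossGrad_le (hX : Integrable X μ) (hβ : β < 1)
    (hv : ∀ᵐ ω ∂μ, -β ≤ ⟪X ω, v⟫) :
    ‖expectedLogLossGrad μ X v‖ ≤ (∫ ω, ‖X ω‖ ∂μ) / (1 - β) := by
  rw [expectedLogLossGrad, ← integral_div]
  refine norm_integral_le_of_norm_le (hX.norm.div_const _) (hv.mono fun _ hω => ?_)
  rw [norm_neg]
  exact norm_inv_one_add_inner_smul_le hβ hω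

theorem abs_expectedLogLoss_sub_le (hX : Integrable X μ) (hβ0 : 0 ≤ β) (hβ1 : β < 1)
    (hv : ∀ᵐ ω ∂μ, -β ≤ ⟪X ω, v⟫) (hw : ∀ᵐ ω ∂μ, -β ≤ ⟪X ω, w⟫) :
    |expectedLogLoss μ X v - expectedLogLoss μ X w| ≤ (∫ ω, ‖X ω‖ ∂μ) / (1 - β) * ‖v - w‖ := by
  rw [expectedLogLoss, expectedLogLoss, ← integral_sub
    (integrable_log_one_add_inner hX hβ0 hβ1 hv).fun_neg
    (integrable_log_one_add_inner hX hβ0 hβ1 hw).fun_neg, ← Real.norm_eq_abs]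
  calc _ ≤ ∫ ω, ‖X ω‖ * ‖v - w‖ / (1 - β) ∂μ := by
        refine norm_integral_le_of_norm_le ((hX.norm.mul_const _).div_const _) ?_
        filter_upwards [hv, hw] with ω hvω hwω
        rw [Real.norm_eq_abs, neg_sub_neg, abs_sub_comm]
        exact abs_log_one_add_inner_sub_le hβ1 hvω hwω
    _ = _ := by
        rw [integral_div, integral_mul_const]
        ring

theorem inner_expectedLogLossGrad_le [CompleteSpace E] (hX : Integrable X μ) (hβ0 : 0 ≤ β)
    (hβ1 : β < 1) (hv : ∀ᵐ ω ∂μ, -β ≤ ⟪X ω, v⟫) (hw : ∀ᵐ ω ∂μ, -β ≤ ⟪X ω, w⟫) :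
    ⟪expectedLogLossGrad μ X v, w - v⟫ ≤ expectedLogLoss μ X w - expectedLogLoss μ X v := by
  have hg := (integrable_inv_one_add_inner_smul hX hβ1 hv).fun_neg
  have hlv := (integrable_log_one_add_inner hX hβ0 hβ1 hv).fun_neg
  have hlw := (integrable_log_one_add_inner hX hβ0 hβ1 hw).fun_neg
  rw [expectedLogLossGrad, expectedLogLoss, expectedLogLoss, ← integral_sub hlw hlv,
    real_inner_comm, ← integral_inner hg]
  refine integral_mono_ae (hg.const_inner _) (hlw.sub hlv) ?_
  filter_upwards [hv, hw] with ω hvω hwω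
  have := Real.log_sub_log_le_sub_div (a := 1 + ⟪X ω, v⟫) (b := 1 + ⟪X ω, w⟫)
    (by linarith) (by linarith)
  rw [add_sub_add_left_eq_sub, div_eq_inv_mul] at this
  simp only [inner_neg_right, real_inner_smul_right, inner_sub_left, real_inner_comm (X ω)]
  linarith

theorem norm_expectedLogLossGrad_sub_le (hX : Integrable X μ)
    (hX2 : Integrable (fun ω => ‖X ω‖ ^ 2) μ) (hβ : β < 1)
    (hv : ∀ᵐ ω ∂μ, -β ≤ ⟪X ω, v⟫) (hw : ∀ᵐ ω ∂μ, -β ≤ ⟪X ω, w⟫) :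
    ‖expectedLogLossGrad μ X v - expectedLogLossGrad μ X w‖
      ≤ (∫ ω, ‖X ω‖ ^ 2 ∂μ) / (1 - β) ^ 2 * ‖v - w‖ := by
  rw [expectedLogLossGrad, expectedLogLossGrad, ← integral_sub
    (integrable_inv_one_add_inner_smul hX hβ hv).fun_neg
    (integrable_inv_one_add_inner_smul hX hβ hw).fun_neg]
  calc _ ≤ ∫ ω, ‖X ω‖ ^ 2 * ‖v - w‖ / (1 - β) ^ 2 ∂μ := by
        refine norm_integral_le_of_norm_le ((hX2.mul_const _).div_const _) ?_
        filter_upwards [hv, hw] with ω hvω hwω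
        rw [neg_sub_neg, norm_sub_rev]
        exact norm_inv_one_add_inner_smul_sub_le hβ hvω hwω
    _ = _ := by
        rw [integral_div, integral_mul_const]
        ring

end LogUtility

theorem integral_norm_le_sqrt_integral_norm_sq {Ω E : Type*} [MeasurableSpace Ω]
    {μ : Measure Ω} [IsProbabilityMeasure μ] [NormedAddCommGroup E] {X : Ω → E}
    (hX : MemLp X 2 μ) : ∫ ω, ‖X ω‖ ∂μ ≤ √(∫ ω, ‖X ω‖ ^ 2 ∂μ) := by
  have h := ProbabilityTheory.variance_nonneg (fun ω => ‖X ω‖) μ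
  rw [ProbabilityTheory.variance_eq_sub hX.norm, sub_nonneg] at h
  exact (le_abs_self _).trans (Real.abs_le_sqrt h)

section WeightedGradient

variable {Ω E ι : Type*} [MeasurableSpace Ω] [NormedAddCommGroup E] [InnerProductSpace ℝ E]
  [Fintype ι] {μ : ι → Measure Ω} {X : Ω → E} {β : ℝ} {v w : E}

def expectedLogLossVec (μ : ι → Measure Ω) (X : Ω → E) (v : E) : EuclideanSpace ℝ ι :=
  WithLp.toLp 2 fun j => expectedLogLoss (μ j) X v

def weightedLogLossGrad (μ : ι → Measure Ω) (X : Ω → E) (a : EuclideanSpace ℝ ι) (v : E) : E :=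
  ∑ j, a j • expectedLogLossGrad (μ j) X v

theorem inner_weightedLogLossGrad_sub_nonneg [CompleteSpace E]
    (hX : ∀ j, Integrable X (μ j)) (hβ0 : 0 ≤ β) (hβ1 : β < 1)
    (hv : ∀ j, ∀ᵐ ω ∂μ j, -β ≤ ⟪X ω, v⟫) (hw : ∀ j, ∀ᵐ ω ∂μ j, -β ≤ ⟪X ω, w⟫)
    {a b : EuclideanSpace ℝ ι} (ha : ∀ j, 0 ≤ a j) (hb : ∀ j, 0 ≤ b j)
    (hab : 0 ≤ ⟪a - b, expectedLogLossVec μ X v - expectedLogLossVec μ X w⟫) :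
    0 ≤ ⟪weightedLogLossGrad μ X a v - weightedLogLossGrad μ X b w, v - w⟫ := by
  set f := fun j => expectedLogLoss (μ j) X v - expectedLogLoss (μ j) X w
  have hgv : ∀ j, f j ≤ ⟪expectedLogLossGrad (μ j) X v, v - w⟫ := fun j => by
    have := inner_expectedLogLossGrad_le (hX j) hβ0 hβ1 (hv j) (hw j)
    rw [← neg_sub v w, inner_neg_right] at this
    linarith
  have hgw : ∀ j, ⟪expectedLogLossGrad (μ j) X w, v - w⟫ ≤ f j := fun j =>
    inner_expectedLogLossGrad_le (hX j) hβ0 hβ1 (hw j) (hv j)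
  have hab' : ⟪a - b, expectedLogLossVec μ X v - expectedLogLossVec μ X w⟫
      = ∑ j, a j * f j - ∑ j, b j * f j := by
    rw [PiLp.inner_apply, ← Finset.sum_sub_distrib]
    refine Finset.sum_congr rfl fun j _ => ?_
    simp [expectedLogLossVec, f]
    ring
  calc 0 ≤ ∑ j, a j * f j - ∑ j, b j * f j := hab' ▸ hab
    _ ≤ ∑ j, a j * ⟪expectedLogLossGrad (μ j) X v, v - w⟫
          - ∑ j, b j * ⟪expectedLogLossGrad (μ j) X w, v - w⟫ :=
        sub_le_sub (Finset.sum_le_sum fun j _ => mul_le_mul_of_nonneg_left (hgv j) (ha j))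
          (Finset.sum_le_sum fun j _ => mul_le_mul_of_nonneg_left (hgw j) (hb j))
    _ = _ := by
        simp only [weightedLogLossGrad, inner_sub_left, sum_inner, real_inner_smul_left]

theorem norm_expectedLogLossVec_sub_le [∀ j, IsProbabilityMeasure (μ j)]
    (hX : ∀ j, MemLp X 2 (μ j)) (hβ0 : 0 ≤ β) (hβ1 : β < 1)
    (hv : ∀ j, ∀ᵐ ω ∂μ j, -β ≤ ⟪X ω, v⟫) (hw : ∀ j, ∀ᵐ ω ∂μ j, -β ≤ ⟪X ω, w⟫) :
    ‖expectedLogLossVec μ X v - expectedLogLossVec μ X w‖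
      ≤ √(∑ j, ∫ ω, ‖X ω‖ ^ 2 ∂μ j) * (‖v - w‖ / (1 - β)) := by
  have hc : 0 < 1 - β := sub_pos.2 hβ1
  rw [EuclideanSpace.norm_eq]
  refine sqrt_sum_sq_le_sqrt_sum_mul (fun j => integral_nonneg fun _ => by positivity)
    (by positivity) fun j => ?_
  rw [abs_norm, PiLp.sub_apply, Real.norm_eq_abs]
  refine (abs_expectedLogLoss_sub_le ((hX j).integrable one_le_two) hβ0 hβ1 (hv j) (hw j)).trans ?_
  rw [div_mul_eq_mul_div, mul_div_assoc]
  gcongr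
  exact integral_norm_le_sqrt_integral_norm_sq (hX j)

theorem sqrt_sum_sq_norm_expectedLogLossGrad_le [∀ j, IsProbabilityMeasure (μ j)]
    (hX : ∀ j, MemLp X 2 (μ j)) (hβ : β < 1) (hv : ∀ j, ∀ᵐ ω ∂μ j, -β ≤ ⟪X ω, v⟫) :
    √(∑ j, ‖expectedLogLossGrad (μ j) X v‖ ^ 2)
      ≤ √(∑ j, ∫ ω, ‖X ω‖ ^ 2 ∂μ j) * (1 / (1 - β)) := by
  have hc : 0 < 1 - β := sub_pos.2 hβ
  refine sqrt_sum_sq_le_sqrt_sum_mul (fun j => integral_nonneg fun _ => by positivity)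
    (by positivity) fun j => ?_
  rw [abs_norm, mul_one_div]
  refine (norm_expectedLogLossGrad_le ((hX j).integrable one_le_two) hβ (hv j)).trans ?_
  gcongr
  exact integral_norm_le_sqrt_integral_norm_sq (hX j)

theorem norm_weightedLogLossGrad_sub_le [∀ j, IsProbabilityMeasure (μ j)]
    (hX : ∀ j, MemLp X 2 (μ j)) (hβ0 : 0 ≤ β) (hβ1 : β < 1)
    (hv : ∀ j, ∀ᵐ ω ∂μ j, -β ≤ ⟪X ω, v⟫) (hw : ∀ j, ∀ᵐ ω ∂μ j, -β ≤ ⟪X ω, w⟫)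
    {a b : EuclideanSpace ℝ ι} (ha : ∀ j, |a j| ≤ 1) {τ : ℝ}
    (hab : ‖a - b‖ ≤ τ * ‖expectedLogLossVec μ X v - expectedLogLossVec μ X w‖) (hτ : 0 ≤ τ) :
    ‖weightedLogLossGrad μ X a v - weightedLogLossGrad μ X b w‖
      ≤ (1 + τ) * (∑ j, ∫ ω, ‖X ω‖ ^ 2 ∂μ j) / (1 - β) ^ 2 * ‖v - w‖ := by
  have hM : 0 ≤ ∑ j, ∫ ω, ‖X ω‖ ^ 2 ∂μ j :=
    Finset.sum_nonneg fun j _ => integral_nonneg fun _ => by positivity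
  have hgrad : ∑ j, |a j| * ‖expectedLogLossGrad (μ j) X v - expectedLogLossGrad (μ j) X w‖
      ≤ (∑ j, ∫ ω, ‖X ω‖ ^ 2 ∂μ j) / (1 - β) ^ 2 * ‖v - w‖ := by
    rw [Finset.sum_div, Finset.sum_mul]
    exact Finset.sum_le_sum fun j _ => (mul_le_of_le_one_left (norm_nonneg _) (ha j)).trans
      (norm_expectedLogLossGrad_sub_le ((hX j).integrable one_le_two)
        ((memLp_two_iff_integrable_sq_norm (hX j).1).1 (hX j)) hβ1 (hv j) (hw j))
  have hweight : ∑ j, |a j - b j| * ‖expectedLogLossGrad (μ j) X w‖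
      ≤ τ * (∑ j, ∫ ω, ‖X ω‖ ^ 2 ∂μ j) / (1 - β) ^ 2 * ‖v - w‖ :=
    calc _ ≤ √(∑ j, |a j - b j| ^ 2) * √(∑ j, ‖expectedLogLossGrad (μ j) X w‖ ^ 2) :=
          Real.sum_mul_le_sqrt_mul_sqrt _ _ _
      _ = ‖a - b‖ * √(∑ j, ‖expectedLogLossGrad (μ j) X w‖ ^ 2) := by
          simp [EuclideanSpace.norm_eq]
      _ ≤ τ * (√(∑ j, ∫ ω, ‖X ω‖ ^ 2 ∂μ j) * (‖v - w‖ / (1 - β)))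
            * (√(∑ j, ∫ ω, ‖X ω‖ ^ 2 ∂μ j) * (1 / (1 - β))) := by
          gcongr
          · exact hab.trans (by gcongr; exact norm_expectedLogLossVec_sub_le hX hβ0 hβ1 hv hw)
          · exact sqrt_sum_sq_norm_expectedLogLossGrad_le hX hβ1 hw
      _ = τ * (√(∑ j, ∫ ω, ‖X ω‖ ^ 2 ∂μ j) * √(∑ j, ∫ ω, ‖X ω‖ ^ 2 ∂μ j)) / (1 - β) ^ 2
            * ‖v - w‖ := by
          generalize 1 - β = c
          ring
      _ = _ := by rw [Real.mul_self_sqrt hM]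
  calc _ ≤ _ := norm_sum_smul_sub_sum_smul_le _ _ _ _
    _ ≤ _ := add_le_add hgrad hweight
    _ = _ := by ring

theorem weightedLogLossGrad_monotone_lipschitz_of_isMinOn [CompleteSpace E]
    [∀ j, IsProbabilityMeasure (μ j)] (hX : ∀ j, MemLp X 2 (μ j)) (hβ0 : 0 ≤ β) (hβ1 : β < 1)
    (hv : ∀ j, ∀ᵐ ω ∂μ j, -β ≤ ⟪X ω, v⟫) (hw : ∀ j, ∀ᵐ ω ∂μ j, -β ≤ ⟪X ω, w⟫)
    {K : Set (EuclideanSpace ℝ ι)} (hK : Convex ℝ K) (hK01 : ∀ a ∈ K, ∀ j, a j ∈ Set.Icc 0 1)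
    {t : ℝ} (ht : 0 < t) {a b : EuclideanSpace ℝ ι} (ha : a ∈ K) (hb : b ∈ K)
    (hav : IsMinOn (fun z => ‖z - t • expectedLogLossVec μ X v‖) K a)
    (hbw : IsMinOn (fun z => ‖z - t • expectedLogLossVec μ X w‖) K b) :
    0 ≤ ⟪weightedLogLossGrad μ X a v - weightedLogLossGrad μ X b w, v - w⟫ ∧
      ‖weightedLogLossGrad μ X a v - weightedLogLossGrad μ X b w‖
        ≤ (1 + t) * (∑ j, ∫ ω, ‖X ω‖ ^ 2 ∂μ j) / (1 - β) ^ 2 * ‖v - w‖ :=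
  ⟨inner_weightedLogLossGrad_sub_nonneg (fun j => (hX j).integrable one_le_two) hβ0 hβ1 hv hw
      (fun j => (hK01 a ha j).1) (fun j => (hK01 b hb j).1)
      (inner_sub_nonneg_of_isMinOn_smul hK ht ha hb hav hbw),
    norm_weightedLogLossGrad_sub_le hX hβ0 hβ1 hv hw
      (fun j => abs_le.2 ⟨by linarith [(hK01 a ha j).1], (hK01 a ha j).2⟩)
      (norm_sub_le_of_isMinOn_smul hK ht.le ha hb hav hbw) ht.le⟩

end WeightedGradient

section TwoAccount

variable {E : Type*} [NormedAddCommGroup E] [InnerProductSpace ℝ E]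

def twoAccountOperator (G : E → E) (κ : ℝ) (x : E × E) : E × E :=
  (G x.1 + κ • (x.1 - x.2), G x.2 + κ • (x.2 - x.1))

variable {G : E → E} {κ : ℝ} {x y : E × E}

theorem twoAccountOperator_sub :
    (twoAccountOperator G κ x).1 - (twoAccountOperator G κ y).1
        = G x.1 - G y.1 + κ • ((x.1 - y.1) - (x.2 - y.2)) ∧
      (twoAccountOperator G κ x).2 - (twoAccountOperator G κ y).2
        = G x.2 - G y.2 - κ • ((x.1 - y.1) - (x.2 - y.2)) := by
  constructor <;>
  · simp only [twoAccountOperator, smul_sub]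
    abel

theorem twoAccountOperator_inner_nonneg (hκ : 0 ≤ κ)
    (h₁ : 0 ≤ ⟪G x.1 - G y.1, x.1 - y.1⟫) (h₂ : 0 ≤ ⟪G x.2 - G y.2, x.2 - y.2⟫) :
    0 ≤ ⟪(twoAccountOperator G κ x).1 - (twoAccountOperator G κ y).1, x.1 - y.1⟫
      + ⟪(twoAccountOperator G κ x).2 - (twoAccountOperator G κ y).2, x.2 - y.2⟫ := by
  obtain ⟨e₁, e₂⟩ := twoAccountOperator_sub (G := G) (κ := κ) (x := x) (y := y)
  have hκD : κ * ⟪(x.1 - y.1) - (x.2 - y.2), x.1 - y.1⟫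
      - κ * ⟪(x.1 - y.1) - (x.2 - y.2), x.2 - y.2⟫ = κ * ‖(x.1 - y.1) - (x.2 - y.2)‖ ^ 2 := by
    rw [← mul_sub, ← inner_sub_right, real_inner_self_eq_norm_sq]
  rw [e₁, e₂, inner_add_left (G x.1 - G y.1), inner_sub_left (G x.2 - G y.2),
    real_inner_smul_left, real_inner_smul_left]
  linarith [mul_nonneg hκ (sq_nonneg ‖(x.1 - y.1) - (x.2 - y.2)‖)]

theorem twoAccountOperator_norm_le {L : ℝ} (hL : 0 ≤ L) (hκ : 0 ≤ κ)
    (h₁ : ‖G x.1 - G y.1‖ ≤ L * ‖x.1 - y.1‖) (h₂ : ‖G x.2 - G y.2‖ ≤ L * ‖x.2 - y.2‖) :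
    √(‖(twoAccountOperator G κ x).1 - (twoAccountOperator G κ y).1‖ ^ 2
        + ‖(twoAccountOperator G κ x).2 - (twoAccountOperator G κ y).2‖ ^ 2)
      ≤ √2 * (L + 2 * κ) * √(‖x.1 - y.1‖ ^ 2 + ‖x.2 - y.2‖ ^ 2) := by
  obtain ⟨e₁, e₂⟩ := twoAccountOperator_sub (G := G) (κ := κ) (x := x) (y := y)
  have hD : ‖κ • ((x.1 - y.1) - (x.2 - y.2))‖ ≤ κ * (‖x.1 - y.1‖ + ‖x.2 - y.2‖) := by
    rw [norm_smul, Real.norm_of_nonneg hκ]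
    exact mul_le_mul_of_nonneg_left (norm_sub_le _ _) hκ
  have hF₁ := (norm_add_le _ _).trans (add_le_add h₁ hD)
  have hF₂ := (norm_sub_le _ _).trans (add_le_add h₂ hD)
  rw [← e₁] at hF₁
  rw [← e₂] at hF₂
  have hA := norm_nonneg ((twoAccountOperator G κ x).1 - (twoAccountOperator G κ y).1)
  have hB := norm_nonneg ((twoAccountOperator G κ x).2 - (twoAccountOperator G κ y).2)
  calc _ ≤ ‖(twoAccountOperator G κ x).1 - (twoAccountOperator G κ y).1‖
        + ‖(twoAccountOperator G κ x).2 - (twoAccountOperator G κ y).2‖ :=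
        Real.sqrt_le_iff.2 ⟨add_nonneg hA hB, by nlinarith⟩
    _ ≤ (L + 2 * κ) * (‖x.1 - y.1‖ + ‖x.2 - y.2‖) := by linarith
    _ ≤ (L + 2 * κ) * (√2 * √(‖x.1 - y.1‖ ^ 2 + ‖x.2 - y.2‖ ^ 2)) := by
        gcongr
        exact add_le_sqrt_two_mul_sqrt _ _
    _ = _ := by ring

end TwoAccount

section Coordinates

variable {ι : Type*} [Fintype ι]

theorem sum_sub_mul_sub_eq_inner_toLp (a b c e : ι → ℝ) :
    ∑ i, (a i - b i) * (c i - e i)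
      = ⟪(WithLp.toLp 2 a : EuclideanSpace ℝ ι) - WithLp.toLp 2 b,
          WithLp.toLp 2 c - WithLp.toLp 2 e⟫ := by
  rw [real_inner_comm]
  rfl

theorem sum_sub_sq_eq_norm_toLp_sq (a b : ι → ℝ) :
    ∑ i, (a i - b i) ^ 2 = ‖(WithLp.toLp 2 a : EuclideanSpace ℝ ι) - WithLp.toLp 2 b‖ ^ 2 := by
  rw [EuclideanSpace.real_norm_sq_eq]
  rfl

theorem isMinOn_toLp_of_sqrt_sum_sq_le {K : Set (ι → ℝ)} {p φ : ι → ℝ} {s : ℝ}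
    (h : ∀ u ∈ K, √(∑ j, (p j - φ j / s) ^ 2) ≤ √(∑ j, (u j - φ j / s) ^ 2)) :
    IsMinOn (fun z : EuclideanSpace ℝ ι => ‖z - s⁻¹ • WithLp.toLp 2 φ‖) (WithLp.ofLp ⁻¹' K)
      (WithLp.toLp 2 p) :=
  isMinOn_iff.2 fun z hz => by simpa [EuclideanSpace.norm_eq, div_eq_inv_mul] using h z.ofLp hz

theorem memLp_toLp_two {μ : Measure (ι → ℝ)} (h : Integrable (fun ξ => ∑ i, ξ i ^ 2) μ) :
    MemLp (WithLp.toLp 2 : (ι → ℝ) → EuclideanSpace ℝ ι) 2 μ :=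
  (memLp_two_iff_integrable_sq_norm (PiLp.continuous_toLp 2 _).aestronglyMeasurable).2
    (by simpa [EuclideanSpace.real_norm_sq_eq] using h)

theorem expectedLogLossGrad_toLp_apply {μ : Measure (ι → ℝ)} {β : ℝ} {x : ι → ℝ}
    (hX : Integrable (WithLp.toLp 2 : (ι → ℝ) → EuclideanSpace ℝ ι) μ) (hβ : β < 1)
    (hx : ∀ᵐ ξ ∂μ, -β ≤ ∑ i, x i * ξ i) (i : ι) :
    expectedLogLossGrad μ (WithLp.toLp 2) (WithLp.toLp 2 x) i
      = ∫ ξ, -(ξ i) / (1 + ∑ m, x m * ξ m) ∂μ := by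
  have h := (integrable_inv_one_add_inner_smul (v := WithLp.toLp 2 x) hX hβ hx).fun_neg
  refine ((EuclideanSpace.proj i).integral_comp_comm h).symm.trans
    (integral_congr_ae (ae_of_all _ fun ξ => ?_))
  change -((1 + ∑ m, x m * ξ m)⁻¹ * ξ i) = _
  ring

theorem weightedLogLossGrad_toLp_apply {ι' : Type*} [Fintype ι'] {μ : ι' → Measure (ι → ℝ)}
    {β : ℝ} {x : ι → ℝ} (hX : ∀ j, Integrable (WithLp.toLp 2 : (ι → ℝ) → EuclideanSpace ℝ ι) (μ j))
    (hβ : β < 1) (hx : ∀ j, ∀ᵐ ξ ∂μ j, -β ≤ ∑ i, x i * ξ i) (θ : ι' → ℝ) (i : ι) :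
    weightedLogLossGrad μ (WithLp.toLp 2) (WithLp.toLp 2 θ) (WithLp.toLp 2 x) i
      = ∑ j, θ j * ∫ ξ, -(ξ i) / (1 + ∑ m, x m * ξ m) ∂μ j := by
  simp [weightedLogLossGrad, expectedLogLossGrad_toLp_apply (hX _) hβ (hx _)]

end Coordinates

theorem mem_Icc_of_mem_simplex {n : ℕ} {θ : Fin n → ℝ} (h : θ ∈ simplex n) (j : Fin n) :
    θ j ∈ Set.Icc 0 1 :=
  ⟨h.2 j, h.1 ▸ Finset.single_le_sum (fun k _ => h.2 k) (Finset.mem_univ j)⟩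

theorem F_monotone_lipschitz_general
    (d n : ℕ)
    (lam κ β : ℝ) (hlam : 0 < lam) (hκ : 0 < κ) (hβ : β ∈ Set.Ico (0 : ℝ) 1)
    (Q : Fin n → Measure (Fin d → ℝ)) (hQ : ∀ j, IsProbabilityMeasure (Q j))
    (σ2 : Fin n → ℝ)
    (hsupp : ∀ j, ∀ x ∈ portfolioSet d, ∀ᵐ ξ ∂(Q j), -β ≤ ∑ i, x i * ξ i)
    (hInt : ∀ j, Integrable (fun ξ => ∑ i, (ξ i) ^ 2) (Q j))
    (hmom : ∀ j, (∫ ξ, (∑ i, (ξ i) ^ 2) ∂(Q j)) ≤ σ2 j)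
    (Θhat : Set (Fin n → ℝ))
    (hconv : Convex ℝ Θhat) (hsub : Θhat ⊆ simplex n)
    (φn : (Fin d → ℝ) → Fin n → ℝ)
    (hφn : ∀ x : Fin d → ℝ,
      φn x = fun j => ∫ ξ, -Real.log (1 + ∑ i, x i * ξ i) ∂(Q j))
    (θstar : (Fin d → ℝ) → Fin n → ℝ)
    (hθ1 : ∀ x : Fin d → ℝ, θstar x ∈ Θhat)
    (hθ2 : ∀ x : Fin d → ℝ, ∀ u ∈ Θhat,
      Real.sqrt (∑ j, (θstar x j - φn x j / (2 * lam)) ^ 2)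
        ≤ Real.sqrt (∑ j, (u j - φn x j / (2 * lam)) ^ 2))
    (F : (Fin d → ℝ) × (Fin d → ℝ) → (Fin d → ℝ) × (Fin d → ℝ))
    (hF : ∀ x : (Fin d → ℝ) × (Fin d → ℝ),
      F x = (fun i => (∑ j, θstar x.1 j * ∫ ξ, (-(ξ i) / (1 + ∑ m, x.1 m * ξ m)) ∂(Q j))
                + κ * (x.1 i - x.2 i),
             fun i => (∑ j, θstar x.2 j * ∫ ξ, (-(ξ i) / (1 + ∑ m, x.2 m * ξ m)) ∂(Q j))
                + κ * (x.2 i - x.1 i))) :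
    (∀ x y : (Fin d → ℝ) × (Fin d → ℝ),
      x.1 ∈ portfolioSet d → x.2 ∈ portfolioSet d →
      y.1 ∈ portfolioSet d → y.2 ∈ portfolioSet d →
      0 ≤ (∑ i, ((F x).1 i - (F y).1 i) * (x.1 i - y.1 i))
          + ∑ i, ((F x).2 i - (F y).2 i) * (x.2 i - y.2 i)) ∧
    (∀ x y : (Fin d → ℝ) × (Fin d → ℝ),
      x.1 ∈ portfolioSet d → x.2 ∈ portfolioSet d →
      y.1 ∈ portfolioSet d → y.2 ∈ portfolioSet d →
      Real.sqrt ((∑ i, ((F x).1 i - (F y).1 i) ^ 2) + ∑ i, ((F x).2 i - (F y).2 i) ^ 2)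
        ≤ ((Real.sqrt 2 + Real.sqrt 2 / (2 * lam)) * ((n : ℝ) * (⨆ j, σ2 j) / (1 - β) ^ 2)
            + 2 * Real.sqrt 2 * κ)
          * Real.sqrt ((∑ i, (x.1 i - y.1 i) ^ 2) + ∑ i, (x.2 i - y.2 i) ^ 2)) := by
  obtain ⟨hβ0, hβ1⟩ := hβ
  have : ∀ j, IsProbabilityMeasure (Q j) := hQ
  -- Work in `EuclideanSpace`, where the coordinate sums of the statement are norms and inner
  -- products.
  have hX : ∀ j, MemLp (WithLp.toLp 2 : (Fin d → ℝ) → EuclideanSpace ℝ (Fin d)) 2 (Q j) :=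
    fun j => memLp_toLp_two (hInt j)
  have hK : Convex ℝ (WithLp.ofLp ⁻¹' Θhat : Set (EuclideanSpace ℝ (Fin n))) :=
    hconv.linear_preimage (WithLp.linearEquiv 2 ℝ (Fin n → ℝ)).toLinearMap
  let θ : EuclideanSpace ℝ (Fin d) → EuclideanSpace ℝ (Fin n) :=
    fun v => WithLp.toLp 2 (θstar v.ofLp)
  have hθ : ∀ v, IsMinOn (fun z => ‖z - (2 * lam)⁻¹ • expectedLogLossVec Q (WithLp.toLp 2) v‖)
      (WithLp.ofLp ⁻¹' Θhat) (θ v) := fun v => by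
    rw [show expectedLogLossVec Q (WithLp.toLp 2) v = WithLp.toLp 2 (φn v.ofLp) by rw [hφn]; rfl]
    exact isMinOn_toLp_of_sqrt_sum_sq_le (hθ2 v.ofLp)
  have hM : ∑ j, ∫ ξ, ‖(WithLp.toLp 2 ξ : EuclideanSpace ℝ (Fin d))‖ ^ 2 ∂Q j
      ≤ n * ⨆ j, σ2 j := by
    simpa [EuclideanSpace.real_norm_sq_eq] using sum_le_card_mul_iSup hmom
  let G := fun v => weightedLogLossGrad Q (WithLp.toLp 2) (θ v) v
  have hG : ∀ v w, v.ofLp ∈ portfolioSet d → w.ofLp ∈ portfolioSet d →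
      0 ≤ ⟪G v - G w, v - w⟫ ∧ ‖G v - G w‖
        ≤ (1 + 1 / (2 * lam)) * ((n : ℝ) * (⨆ j, σ2 j) / (1 - β) ^ 2) * ‖v - w‖ :=
    fun v w hv hw => (weightedLogLossGrad_monotone_lipschitz_of_isMinOn hX hβ0 hβ1
      (fun j => hsupp j _ hv) (fun j => hsupp j _ hw) hK
      (fun _ ha => mem_Icc_of_mem_simplex (hsub ha)) (by positivity) (hθ1 _) (hθ1 _) (hθ v)
      (hθ w)).imp_right fun h => h.trans <| by
        rw [one_div, ← mul_div_assoc]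
        gcongr
  have hFG : ∀ x : (Fin d → ℝ) × (Fin d → ℝ), x.1 ∈ portfolioSet d → x.2 ∈ portfolioSet d →
      WithLp.toLp 2 (F x).1
          = (twoAccountOperator G κ (WithLp.toLp 2 x.1, WithLp.toLp 2 x.2)).1 ∧
        WithLp.toLp 2 (F x).2
          = (twoAccountOperator G κ (WithLp.toLp 2 x.1, WithLp.toLp 2 x.2)).2 := by
    intro x hx₁ hx₂
    have hX1 := fun j => (hX j).integrable one_le_two
    constructor <;> ext i <;> simp [hF, twoAccountOperator, G, θ,
      weightedLogLossGrad_toLp_apply hX1 hβ1 (fun j => hsupp j _ hx₁),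
      weightedLogLossGrad_toLp_apply hX1 hβ1 (fun j => hsupp j _ hx₂)]
  refine ⟨fun x y hx₁ hx₂ hy₁ hy₂ => ?_, fun x y hx₁ hx₂ hy₁ hy₂ => ?_⟩
  · rw [sum_sub_mul_sub_eq_inner_toLp, sum_sub_mul_sub_eq_inner_toLp, (hFG x hx₁ hx₂).1,
      (hFG x hx₁ hx₂).2, (hFG y hy₁ hy₂).1, (hFG y hy₁ hy₂).2]
    exact twoAccountOperator_inner_nonneg hκ.le (hG _ _ hx₁ hy₁).1 (hG _ _ hx₂ hy₂).1
  · simp only [sum_sub_sq_eq_norm_toLp_sq, (hFG x hx₁ hx₂).1, (hFG x hx₁ hx₂).2,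
      (hFG y hy₁ hy₂).1, (hFG y hy₁ hy₂).2]
    have hσ : 0 ≤ ⨆ j, σ2 j :=
      Real.iSup_nonneg fun j => (integral_nonneg fun _ => by positivity).trans (hmom j)
    exact (twoAccountOperator_norm_le (by positivity) hκ.le (hG _ _ hx₁ hy₁).2
      (hG _ _ hx₂ hy₂).2).trans_eq (by ring)

/-- Proposition 5.1: the reduced operator `F` of the regularized Bayesian DRVI arising
from the two-account distributionally robust multi-portfolio Nash equilibrium problem
with logarithmic disutility is monotone and Lipschitz continuous on 𝒳 × 𝒳 with modulus
`L_F = (√2 + √2/(2λ)) · n · (max_j σ̄_j²)/(1−β)² + 2√2·κ`.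
Here `θ*(v)` is the Euclidean metric projection of `φⁿ(v)/(2λ)` onto `Θ̂`, monotonicity is
stated with the standard inner product of ℝ^d × ℝ^d, and the Lipschitz estimate with the
Euclidean norm of the product. -/
theorem F_monotone_lipschitz
    (d n : ℕ) (hd : 1 ≤ d) (hn : 1 ≤ n)
    (lam κ β : ℝ) (hlam : 0 < lam) (hκ : 0 < κ) (hβ : β ∈ Set.Ico (0 : ℝ) 1)
    (Q : Fin n → Measure (Fin d → ℝ)) (hQ : ∀ j, IsProbabilityMeasure (Q j))
    (σ2 : Fin n → ℝ)
    (hsupp : ∀ j, ∀ x ∈ portfolioSet d, ∀ᵐ ξ ∂(Q j), -β ≤ ∑ i, x i * ξ i)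
    (hInt : ∀ j, Integrable (fun ξ => ∑ i, (ξ i) ^ 2) (Q j))
    (hmom : ∀ j, (∫ ξ, (∑ i, (ξ i) ^ 2) ∂(Q j)) ≤ σ2 j)
    (Θhat : Set (Fin n → ℝ)) (hne : Θhat.Nonempty) (hcomp : IsCompact Θhat)
    (hconv : Convex ℝ Θhat) (hsub : Θhat ⊆ simplex n)
    (φn : (Fin d → ℝ) → Fin n → ℝ)
    (hφn : ∀ x : Fin d → ℝ,
      φn x = fun j => ∫ ξ, -Real.log (1 + ∑ i, x i * ξ i) ∂(Q j))
    (θstar : (Fin d → ℝ) → Fin n → ℝ)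
    (hθ1 : ∀ x : Fin d → ℝ, θstar x ∈ Θhat)
    (hθ2 : ∀ x : Fin d → ℝ, ∀ u ∈ Θhat,
      Real.sqrt (∑ j, (θstar x j - φn x j / (2 * lam)) ^ 2)
        ≤ Real.sqrt (∑ j, (u j - φn x j / (2 * lam)) ^ 2))
    (F : (Fin d → ℝ) × (Fin d → ℝ) → (Fin d → ℝ) × (Fin d → ℝ))
    (hF : ∀ x : (Fin d → ℝ) × (Fin d → ℝ),
      F x = (fun i => (∑ j, θstar x.1 j * ∫ ξ, (-(ξ i) / (1 + ∑ m, x.1 m * ξ m)) ∂(Q j))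
                + κ * (x.1 i - x.2 i),
             fun i => (∑ j, θstar x.2 j * ∫ ξ, (-(ξ i) / (1 + ∑ m, x.2 m * ξ m)) ∂(Q j))
                + κ * (x.2 i - x.1 i))) :
    (∀ x y : (Fin d → ℝ) × (Fin d → ℝ),
      x.1 ∈ portfolioSet d → x.2 ∈ portfolioSet d →
      y.1 ∈ portfolioSet d → y.2 ∈ portfolioSet d →
      0 ≤ (∑ i, ((F x).1 i - (F y).1 i) * (x.1 i - y.1 i))
          + ∑ i, ((F x).2 i - (F y).2 i) * (x.2 i - y.2 i)) ∧
    (∀ x y : (Fin d → ℝ) × (Fin d → ℝ),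
      x.1 ∈ portfolioSet d → x.2 ∈ portfolioSet d →
      y.1 ∈ portfolioSet d → y.2 ∈ portfolioSet d →
      Real.sqrt ((∑ i, ((F x).1 i - (F y).1 i) ^ 2) + ∑ i, ((F x).2 i - (F y).2 i) ^ 2)
        ≤ ((Real.sqrt 2 + Real.sqrt 2 / (2 * lam)) * ((n : ℝ) * (⨆ j, σ2 j) / (1 - β) ^ 2)
            + 2 * Real.sqrt 2 * κ)
          * Real.sqrt ((∑ i, (x.1 i - y.1 i) ^ 2) + ∑ i, (x.2 i - y.2 i) ^ 2)) :=
  F_monotone_lipschitz_general d n lam κ β hlam hκ hβ Q hQ σ2 hsupp hInt hmom Θhat hconv hsub φn hφn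
    θstar hθ1 hθ2 F hF
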